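/- arXiv:1606.01112 — 8 statements merged into one kernel-verified Lean document; each statement's English description precedes it below -/
import Mathlib

section
/- Let A be the m×m matrix A = diag(ε₁a₁,...,ε_m a_m) + B where B is the rank-one matrix with every row equal to (a₁,...,a_m), with all aᵢ > 0 and εᵢ > 0, and suppose ε₁a₁ > ε₂a₂ > ... > ε_m a_m (all distinct). Then A has m positive distinct real eigenvalues λ₁ > ... > λ_m satisfying εᵢaᵢ < λᵢ < ε_{i-1}a_{i-1} for i = 2,...,m, and min_i{εᵢaᵢ} + Σᵢaᵢ ≤ λ₁ ≤ max_i{εᵢaᵢ} + Σᵢaᵢ. -/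
/-!
Write `d i = ε i * a i`. By the matrix determinant lemma,
`det (x • 1 - A) = g x := ∏ i, (x - d i) - ∑ j, a j * ∏ i ≠ j, (x - d i)`.
At a node only one term survives, `g (d k) = -(a k * ∏ i ≠ k, (d k - d i))`, whose sign is
`(-1) ^ (k + 1)` because the nodes decrease; so `g` changes sign between consecutive nodes.
Above all nodes `g x = ∏ i, (x - d i) * (1 - ∑ j, a j / (x - d j))`, which is `≥ 0` at
`max d + ∑ a` and `≤ 0` at `max (d 0) (min d + ∑ a)`. The intermediate value theorem
places the `m` roots.
-/

open Matrix BigOperators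
open Finset

theorem exists_mem_Ioo_eq_zero_of_mul_neg {α : Type*} [ConditionallyCompleteLinearOrder α]
    [TopologicalSpace α] [OrderTopology α] [DenselyOrdered α] {a b : α} {f : α → ℝ}
    (hab : a ≤ b) (hf : ContinuousOn f (Set.Icc a b)) (h : f a * f b < 0) :
    ∃ x ∈ Set.Ioo a b, f x = 0 := by
  rcases mul_neg_iff.mp h with ⟨hfa, hfb⟩ | ⟨hfa, hfb⟩
  · exact intermediate_value_Ioo' hab hf ⟨hfb, hfa⟩
  · exact intermediate_value_Ioo hab hf ⟨hfa, hfb⟩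

section CharFun

variable {ι : Type*} [Fintype ι] [DecidableEq ι] (d a : ι → ℝ)

def diagRankOneCharFun (x : ℝ) : ℝ :=
  ∏ i, (x - d i) - ∑ j, a j * ∏ i ∈ {j}ᶜ, (x - d i)

theorem continuous_diagRankOneCharFun : Continuous (diagRankOneCharFun d a) := by
  unfold diagRankOneCharFun
  fun_prop

theorem diagRankOneCharFun_eq_prod_mul {x : ℝ} (hx : ∀ i, x - d i ≠ 0) :
    diagRankOneCharFun d a x = (∏ i, (x - d i)) * (1 - ∑ j, a j / (x - d j)) := by
  have hprod : ∀ j, ∏ i ∈ {j}ᶜ, (x - d i) = (∏ i, (x - d i)) / (x - d j) := fun j => by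
    rw [eq_div_iff (hx j), ← prod_erase_mul univ _ (mem_univ j), compl_eq_univ_sdiff,
      sdiff_singleton_eq_erase]
  simp only [diagRankOneCharFun, hprod, mul_sub, mul_one, mul_sum]
  congr 1
  exact sum_congr rfl fun j _ => by ring

theorem diagRankOneCharFun_apply (k : ι) :
    diagRankOneCharFun d a (d k) = -(a k * ∏ i ∈ {k}ᶜ, (d k - d i)) := by
  rw [diagRankOneCharFun, prod_eq_zero (mem_univ k) (sub_self _), zero_sub,
    sum_eq_single k (fun j _ hjk => by
      rw [prod_eq_zero (mem_compl.mpr (by simpa using Ne.symm hjk)) (sub_self _), mul_zero])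
    (fun h => absurd (mem_univ k) h)]

theorem det_smul_one_sub_diagonal_add_vecMulVec (x : ℝ) :
    (x • 1 - (diagonal d + vecMulVec 1 a)).det = diagRankOneCharFun d a x := by
  -- Both sides are continuous in `x`; off the nodes the matrix determinant lemma applies.
  refine congrFun (Continuous.ext_on ((Set.finite_range d).countable.dense_compl ℝ)
    (f := fun x : ℝ => (x • 1 - (diagonal d + vecMulVec 1 a)).det) (by fun_prop)
    (continuous_diagRankOneCharFun d a) fun x hx => ?_) x
  have hx : ∀ i, x - d i ≠ 0 := fun i => sub_ne_zero.mpr fun h => hx ⟨i, h.symm⟩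
  have hfactor : x • 1 - (diagonal d + vecMulVec 1 a)
      = diagonal (fun i => x - d i) * (1 + vecMulVec (fun i => -(x - d i)⁻¹) a) := by
    ext i j
    by_cases h : i = j
    · subst h; simp [diagonal_mul, vecMulVec_apply]; field_simp [hx i]; ring
    · simp [diagonal_mul, vecMulVec_apply, one_apply, h, hx i]
  beta_reduce
  rw [hfactor, det_mul, det_diagonal, vecMulVec_eq Unit,
    det_one_add_replicateCol_mul_replicateRow, diagRankOneCharFun_eq_prod_mul d a hx]
  simp [dotProduct, div_eq_mul_inv, sub_eq_add_neg]

theorem diagRankOneCharFun_nonneg_of_sum_le {x : ℝ} (ha : ∀ j, 0 ≤ a j) (hS : 0 < ∑ j, a j)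
    (hx : ∀ i, ∑ j, a j ≤ x - d i) : 0 ≤ diagRankOneCharFun d a x := by
  have hpos : ∀ i, 0 < x - d i := fun i => hS.trans_le (hx i)
  rw [diagRankOneCharFun_eq_prod_mul d a fun i => (hpos i).ne']
  refine mul_nonneg (prod_pos fun i _ => hpos i).le (sub_nonneg.mpr ?_)
  calc ∑ j, a j / (x - d j) ≤ ∑ j, a j / ∑ i, a i :=
        sum_le_sum fun j _ => div_le_div_of_nonneg_left (ha j) hS (hx j)
    _ = 1 := by rw [← sum_div, div_self hS.ne']

theorem diagRankOneCharFun_nonpos_of_le_sum [Nonempty ι] {x : ℝ} (ha : ∀ j, 0 ≤ a j)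
    (hgt : ∀ i, d i < x) (hx : ∀ i, x - d i ≤ ∑ j, a j) :
    diagRankOneCharFun d a x ≤ 0 := by
  have hpos : ∀ i, 0 < x - d i := fun i => sub_pos.mpr (hgt i)
  rw [diagRankOneCharFun_eq_prod_mul d a fun i => (hpos i).ne']
  refine mul_nonpos_of_nonneg_of_nonpos (prod_pos fun i _ => hpos i).le (sub_nonpos.mpr ?_)
  have hS : 0 < ∑ j, a j := (hpos (Classical.arbitrary ι)).trans_le (hx _)
  calc 1 = ∑ j, a j / ∑ i, a i := by rw [← sum_div, div_self hS.ne']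
    _ ≤ ∑ j, a j / (x - d j) :=
        sum_le_sum fun j _ => div_le_div_of_nonneg_left (ha j) (hpos j) (hx j)

end CharFun

section Interlacing

variable {n : ℕ}

theorem neg_one_pow_mul_prod_compl_sub_pos {d : Fin n → ℝ} (hd : StrictAnti d)
    (k : Fin n) : 0 < (-1) ^ (k : ℕ) * ∏ i ∈ {k}ᶜ, (d k - d i) := by
  have hsplit : ({k}ᶜ : Finset (Fin n)) = Iio k ∪ Ioi k := by ext i; simp
  have hflip : (-1) ^ (k : ℕ) * ∏ i ∈ Iio k, (d k - d i) = ∏ i ∈ Iio k, (d i - d k) := by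
    rw [← Fin.card_Iio k, ← prod_const, ← prod_mul_distrib]
    exact prod_congr rfl fun i _ => by ring
  rw [hsplit, prod_union (disjoint_left.mpr fun i hi hi' => by simp_all [lt_asymm]), ← mul_assoc,
    hflip]
  exact mul_pos (prod_pos fun i hi => sub_pos.mpr (hd (mem_Iio.mp hi)))
    (prod_pos fun i hi => sub_pos.mpr (hd (mem_Ioi.mp hi)))

theorem neg_one_pow_succ_mul_diagRankOneCharFun_pos {d a : Fin n → ℝ} (hd : StrictAnti d)
    (ha : ∀ i, 0 < a i) (k : Fin n) :
    0 < (-1) ^ ((k : ℕ) + 1) * diagRankOneCharFun d a (d k) := by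
  have := mul_pos (ha k) (neg_one_pow_mul_prod_compl_sub_pos hd k)
  rw [diagRankOneCharFun_apply, pow_succ]
  linarith

theorem diagRankOneCharFun_castSucc_mul_succ_neg {d a : Fin (n + 1) → ℝ} (hd : StrictAnti d)
    (ha : ∀ i, 0 < a i) (k : Fin n) :
    diagRankOneCharFun d a (d k.castSucc) * diagRankOneCharFun d a (d k.succ) < 0 := by
  have hsign : (-1 : ℝ) ^ ((k : ℕ) + 1) * (-1) ^ ((k : ℕ) + 1 + 1) = -1 := by
    rw [← pow_add]; exact Odd.neg_one_pow ⟨k + 1, by ring⟩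
  have := mul_pos (neg_one_pow_succ_mul_diagRankOneCharFun_pos hd ha k.castSucc)
    (neg_one_pow_succ_mul_diagRankOneCharFun_pos hd ha k.succ)
  rw [Fin.val_castSucc, Fin.val_succ, mul_mul_mul_comm, hsign, neg_one_mul] at this
  linarith

theorem exists_diagRankOneCharFun_eq_zero_gt_top {d a : Fin (n + 1) → ℝ} (hd : StrictAnti d)
    (ha : ∀ i, 0 < a i) :
    ∃ x, diagRankOneCharFun d a x = 0 ∧ d 0 < x ∧
      (⨅ i, d i) + ∑ i, a i ≤ x ∧ x ≤ (⨆ i, d i) + ∑ i, a i := by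
  set S := ∑ i, a i
  have hS : 0 < S := sum_pos (fun i _ => ha i) univ_nonempty
  have hsup : ∀ i, d i ≤ ⨆ i, d i := le_ciSup (Set.finite_range d).bddAbove
  have hinf : ∀ i, (⨅ i, d i) ≤ d i := ciInf_le (Set.finite_range d).bddBelow
  have htop : diagRankOneCharFun d a (d 0) < 0 := by
    simpa using neg_one_pow_succ_mul_diagRankOneCharFun_pos hd ha 0
  have hupper : 0 ≤ diagRankOneCharFun d a ((⨆ i, d i) + S) :=
    diagRankOneCharFun_nonneg_of_sum_le d a (fun j => (ha j).le) hS fun i => by linarith [hsup i]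
  have hlower : diagRankOneCharFun d a (max (d 0) ((⨅ i, d i) + S)) ≤ 0 := by
    rcases le_or_gt ((⨅ i, d i) + S) (d 0) with h | h
    · rw [max_eq_left h]; exact htop.le
    · rw [max_eq_right h.le]
      refine diagRankOneCharFun_nonpos_of_le_sum d a (fun j => (ha j).le) (fun i => ?_)
        fun i => by linarith [hinf i]
      exact (hd.antitone (Fin.zero_le i)).trans_lt h
  obtain ⟨x, ⟨hlx, hxu⟩, hx⟩ := intermediate_value_Icc
    (max_le (by linarith [hsup 0]) (by linarith [hsup 0, hinf 0]))
    (continuous_diagRankOneCharFun d a).continuousOn ⟨hlower, hupper⟩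
  refine ⟨x, hx, ((le_max_left _ _).trans hlx).lt_of_ne ?_, (le_max_right _ _).trans hlx, hxu⟩
  rintro rfl
  exact htop.ne hx

theorem exists_interlaced_eigenvalues_diagonal_add_vecMulVec {d a : Fin (n + 1) → ℝ}
    (hd : StrictAnti d) (ha : ∀ i, 0 < a i) :
    ∃ lam : Fin (n + 1) → ℝ, StrictAnti lam ∧
      (∀ k, (lam k • 1 - (diagonal d + vecMulVec 1 a)).det = 0) ∧
      (∀ k, d k < lam k) ∧ (∀ k : Fin n, lam k.succ < d k.castSucc) ∧
      (⨅ i, d i) + ∑ i, a i ≤ lam 0 ∧ lam 0 ≤ (⨆ i, d i) + ∑ i, a i := by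
  obtain ⟨top, htop, hd0, hlower, hupper⟩ := exists_diagRankOneCharFun_eq_zero_gt_top hd ha
  choose mid hmid hroot using fun k : Fin n =>
    exists_mem_Ioo_eq_zero_of_mul_neg (hd (Fin.castSucc_lt_succ (i := k))).le
      (continuous_diagRankOneCharFun d a).continuousOn
      (by rw [mul_comm]; exact diagRankOneCharFun_castSucc_mul_succ_neg hd ha k)
  have habove : ∀ k, d k < (Fin.cons top mid : Fin (n + 1) → ℝ) k :=
    Fin.cases hd0 fun k => (hmid k).1
  refine ⟨Fin.cons top mid, Fin.strictAnti_iff_succ_lt.mpr fun k => (hmid k).2.trans (habove _),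
    fun k => ?_, habove, fun k => (hmid k).2, hlower, hupper⟩
  rw [det_smul_one_sub_diagonal_add_vecMulVec]
  exact Fin.cases htop hroot k

end Interlacing

/-- eigenvalues of diag(εᵢaᵢ) + rank-one matrix with rows (a₁,…,a_m). -/
theorem stmt0 (m : ℕ) (hm : 0 < m) (a ε : Fin m → ℝ)
    (ha : ∀ i, 0 < a i) (hε : ∀ i, 0 < ε i)
    (hdist : ∀ i j : Fin m, i < j → ε j * a j < ε i * a i)
    (A : Matrix (Fin m) (Fin m) ℝ)
    (hA : ∀ i j, A i j = (if i = j then ε i * a i else 0) + a j) :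
    ∃ lam : Fin m → ℝ,
      (∀ i, 0 < lam i) ∧ StrictAnti lam ∧
      (∀ i, (A - lam i • (1 : Matrix (Fin m) (Fin m) ℝ)).det = 0) ∧
      (∀ i j : Fin m, (j : ℕ) = (i : ℕ) + 1 →
        ε j * a j < lam j ∧ lam j < ε i * a i) ∧
      (⨅ i, ε i * a i) + ∑ i, a i ≤ lam ⟨0, hm⟩ ∧
      lam ⟨0, hm⟩ ≤ (⨆ i, ε i * a i) + ∑ i, a i := by
  obtain ⟨n, rfl⟩ := Nat.exists_eq_add_one_of_ne_zero hm.ne'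
  have hA' : A = diagonal (fun i => ε i * a i) + vecMulVec 1 a := by
    ext i j; simp [hA, diagonal_apply]
  obtain ⟨lam, hanti, hdet, habove, hbelow, hlower, hupper⟩ :=
    exists_interlaced_eigenvalues_diagonal_add_vecMulVec hdist ha
  refine ⟨lam, fun k => (mul_pos (hε k) (ha k)).trans (habove k), hanti, fun k => ?_,
    fun i j hij => ?_, hlower, hupper⟩
  · rw [← neg_sub, det_neg, hA', hdet k, mul_zero]
  · obtain ⟨k, rfl, rfl⟩ : ∃ k : Fin n, i = k.castSucc ∧ j = k.succ :=
      ⟨⟨i, by omega⟩, rfl, Fin.ext (by simp [hij])⟩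
    exact ⟨habove _, hbelow k⟩
end

section
/- Let f(λ) = det(A − λI) for the m×m matrix A_{ij} = εᵢaᵢδ_{ij} + a_j with aᵢ > 0, εᵢ > 0. Then for each index i, f(εᵢaᵢ) = aᵢ · ∏_{k ≠ i}(ε_k a_k − εᵢaᵢ). -/
open Matrix BigOperators

/-!
Write `d k = ε k * a k - ε i * a i`, so that `A - (ε i * a i) • 1 = diagonal d + (every row equal
to a)` with `d i = 0`. Row `i` is then `a` itself, and subtracting it from every other row (a
unimodular operation) leaves `diagonal d` with row `i` replaced by `a`. Splitting that row as
`a i • eᵢ + (a - a i • eᵢ)`, the second part gives a matrix with zero `i`-th column, and the first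
gives `diagonal (update d i (a i))`, of determinant `a i * ∏_{k ≠ i} d k`.
-/

namespace Matrix

variable {n R : Type*} [Fintype n] [DecidableEq n] [CommRing R]

theorem det_updateRow_diagonal (d v : n → R) (i : n) :
    ((diagonal d).updateRow i v).det = v i * ∏ j ∈ Finset.univ.erase i, d j := by
  have hv : v = Pi.single i (v i) + (v - Pi.single i (v i)) := (add_sub_cancel _ _).symm
  have hzero : ((diagonal d).updateRow i (v - Pi.single i (v i))).det = 0 :=
    det_eq_zero_of_column_eq_zero i fun j => by
      rcases eq_or_ne j i with rfl | hj
      · simp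
      · simp [hj]
  conv_lhs => rw [hv]
  rw [det_updateRow_add, hzero, add_zero, diagonal_updateRow_single, det_diagonal,
    ← Finset.mul_prod_erase _ _ (Finset.mem_univ i), Function.update_self]
  congr 1
  exact Finset.prod_congr rfl fun j hj => Function.update_of_ne (Finset.ne_of_mem_erase hj) (v i) d

theorem det_diagonal_add_replicateRow {d : n → R} {i : n} (hd : d i = 0) (v : n → R) :
    (diagonal d + replicateRow n v).det = v i * ∏ j ∈ Finset.univ.erase i, d j := by
  set w : n → R := 1 - Pi.single i 1
  have hfactor : diagonal d + replicateRow n v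
      = (1 + vecMulVec w (Pi.single i 1)) * (diagonal d).updateRow i v := by
    rw [Matrix.add_mul, Matrix.one_mul, vecMulVec_mul, single_vecMul, one_smul]
    ext j k
    rcases eq_or_ne j i with rfl | hj
    · simp [w, hd, vecMulVec_apply, diagonal_apply]
    · simp [w, hj, vecMulVec_apply]
  have hunit : (1 + vecMulVec w (Pi.single i 1)).det = 1 := by
    simp [vecMulVec_eq Unit, det_one_add_replicateCol_mul_replicateRow, w]
  rw [hfactor, det_mul, hunit, one_mul, det_updateRow_diagonal]

end Matrix

theorem stmt2_general (m : ℕ) (a ε : Fin m → ℝ)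
    (A : Matrix (Fin m) (Fin m) ℝ)
    (hA : ∀ i j, A i j = (if i = j then ε i * a i else 0) + a j) (i : Fin m) :
    (A - (ε i * a i) • (1 : Matrix (Fin m) (Fin m) ℝ)).det
      = a i * ∏ k ∈ Finset.univ.erase i, (ε k * a k - ε i * a i) := by
  have hsplit : A - (ε i * a i) • (1 : Matrix (Fin m) (Fin m) ℝ)
      = diagonal (fun k => ε k * a k - ε i * a i) + replicateRow (Fin m) a := by
    ext j k
    rcases eq_or_ne j k with rfl | hjk
    · simp only [Matrix.sub_apply, hA, ↓reduceIte, Matrix.smul_apply, one_apply_eq, smul_eq_mul,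
        mul_one, Matrix.add_apply, diagonal_apply_eq, replicateRow_apply]
      ring
    · simp [hA, hjk]
  rw [hsplit, det_diagonal_add_replicateRow (sub_self _)]

/-- value of the characteristic polynomial f(λ)=det(A−λI) at λ = εᵢaᵢ. -/
theorem stmt2 (m : ℕ) (a ε : Fin m → ℝ)
    (ha : ∀ i, 0 < a i) (hε : ∀ i, 0 < ε i)
    (A : Matrix (Fin m) (Fin m) ℝ)
    (hA : ∀ i j, A i j = (if i = j then ε i * a i else 0) + a j) (i : Fin m) :
    (A - (ε i * a i) • (1 : Matrix (Fin m) (Fin m) ℝ)).det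
      = a i * ∏ k ∈ Finset.univ.erase i, (ε k * a k - ε i * a i) :=
  stmt2_general m a ε A hA i
end

section
/- Fix positive integers n₁,...,n_m, positive reals p₁,...,p_m, and nonzero reals q₁,...,q_m. Define E(Y) = Σᵢ nᵢqᵢ²Yᵢ² and Fᵢ(Y) = 2pᵢYᵢ − qᵢ²Yᵢ² − E(Y) for Y ∈ ℝ^m. Then there is exactly one point ξ ∈ ℝ^m with ξᵢ > 0 for all i and Fᵢ(ξ) = 0 for all i. -/
open BigOperators

/-- E(Y) = Σᵢ nᵢ qᵢ² Yᵢ². -/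
def flowE (m : ℕ) (n : Fin m → ℕ) (q : Fin m → ℝ) (Y : Fin m → ℝ) : ℝ :=
  ∑ j, (n j : ℝ) * q j ^ 2 * Y j ^ 2

/-- Fᵢ(Y) = 2pᵢYᵢ − qᵢ²Yᵢ² − E(Y). -/
def flowF (m : ℕ) (n : Fin m → ℕ) (p q : Fin m → ℝ) (i : Fin m) (Y : Fin m → ℝ) : ℝ :=
  2 * p i * Y i - q i ^ 2 * Y i ^ 2 - flowE m n q Y

/-!
Put `c = E(Y)`. Each equation `Fᵢ(Y) = 0` says `qᵢ²Yᵢ² - 2pᵢYᵢ + c = 0`, and `nᵢ ≥ 1` gives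
`qᵢ²Yᵢ² ≤ E(Y)`, hence `qᵢ²Yᵢ ≤ pᵢ`: so `Yᵢ` is the smaller root `c / (pᵢ + √(pᵢ² - qᵢ²c))`.
Summing `nᵢ qᵢ²Yᵢ² = nᵢ (2pᵢYᵢ - c)` gives `E(Y) = c (ψ(c) - Σ nᵢ)` with
`ψ(c) = Σ nᵢ · 2pᵢ / (pᵢ + √(pᵢ² - qᵢ²c))` (`rootBalance`), so positive solutions correspond to
the solutions `c > 0` of `ψ(c) = Σ nᵢ + 1`. On `[0, min pᵢ²/qᵢ²]` the function `ψ` is continuous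
and strictly increasing, `ψ(0) = Σ nᵢ`, and at the right endpoint one square root vanishes, which
makes `ψ ≥ Σ nᵢ + 1` there.
-/

/-- The smaller root `(p - √(p² - a c)) / a` of `a y² - 2 p y + c = 0`, rationalized so that it
is also defined for `a = 0`. -/
noncomputable def smallRoot (p a c : ℝ) : ℝ := c / (p + √(p ^ 2 - a * c))

section smallRoot

variable {p a c y : ℝ}

theorem add_sqrt_pos (hp : 0 < p) : 0 < p + √(p ^ 2 - a * c) := by
  positivity

theorem smallRoot_pos (hp : 0 < p) (hc : 0 < c) : 0 < smallRoot p a c :=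
  div_pos hc (add_sqrt_pos hp)

theorem two_mul_mul_smallRoot_sub (hp : 0 < p) (h : a * c ≤ p ^ 2) :
    2 * p * smallRoot p a c - a * smallRoot p a c ^ 2 = c := by
  set s := √(p ^ 2 - a * c)
  have hs : s ^ 2 = p ^ 2 - a * c := Real.sq_sqrt (by linarith)
  have hps : p + s ≠ 0 := (add_sqrt_pos hp).ne'
  have hy : smallRoot p a c * (p + s) = c := div_mul_cancel₀ c hps
  have hay : a * smallRoot p a c = p - s :=
    mul_right_cancel₀ hps (by linear_combination a * hy + hs)
  linear_combination (-smallRoot p a c) * hay + hy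

theorem mul_le_sq_of_two_mul_mul_sub (h : 2 * p * y - a * y ^ 2 = c) : a * c ≤ p ^ 2 := by
  have : p ^ 2 - a * c = (p - a * y) ^ 2 := by rw [← h]; ring
  linarith [sq_nonneg (p - a * y)]

theorem eq_smallRoot (hp : 0 < p) (hy : a * y ≤ p) (h : 2 * p * y - a * y ^ 2 = c) :
    y = smallRoot p a c := by
  have hs : √(p ^ 2 - a * c) = p - a * y := by
    rw [← h, show p ^ 2 - a * (2 * p * y - a * y ^ 2) = (p - a * y) ^ 2 by ring]
    exact Real.sqrt_sq (by linarith)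
  rw [smallRoot, hs]
  exact eq_div_of_mul_eq (by linarith) (by linear_combination h)

theorem two_mul_mul_smallRoot (p a c : ℝ) :
    2 * p * smallRoot p a c = c * (2 * p / (p + √(p ^ 2 - a * c))) := by
  rw [smallRoot]; ring

theorem one_le_two_mul_div_add_sqrt (hp : 0 < p) (h : 0 ≤ a * c) :
    1 ≤ 2 * p / (p + √(p ^ 2 - a * c)) := by
  rw [one_le_div (add_sqrt_pos hp), two_mul, add_le_add_iff_left,
    Real.sqrt_le_left hp.le]
  linarith

theorem strictMonoOn_two_mul_div_add_sqrt (hp : 0 < p) (ha : 0 < a) :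
    StrictMonoOn (fun c => 2 * p / (p + √(p ^ 2 - a * c))) {c | a * c ≤ p ^ 2} := by
  intro c _ d hd hcd
  have hsqrt : √(p ^ 2 - a * d) < √(p ^ 2 - a * c) :=
    Real.sqrt_lt_sqrt (sub_nonneg.mpr hd) (by nlinarith)
  exact div_lt_div_of_pos_left (by positivity) (add_sqrt_pos hp) (by linarith)

end smallRoot

noncomputable def rootBalance (m : ℕ) (n : Fin m → ℕ) (p q : Fin m → ℝ) (c : ℝ) : ℝ :=
  ∑ i, (n i : ℝ) * (2 * p i / (p i + √(p i ^ 2 - q i ^ 2 * c)))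

section rootBalance

variable {m : ℕ} {n : Fin m → ℕ} {p q : Fin m → ℝ}

theorem continuous_rootBalance (hp : ∀ i, 0 < p i) : Continuous (rootBalance m n p q) := by
  unfold rootBalance
  refine continuous_finsetSum _ fun i _ => continuous_const.mul (continuous_const.div
    (by fun_prop) fun c => (add_sqrt_pos (hp i)).ne')

theorem rootBalance_zero (hp : ∀ i, 0 < p i) : rootBalance m n p q 0 = ∑ i, (n i : ℝ) := by
  refine Finset.sum_congr rfl fun i _ => ?_
  rw [mul_zero, sub_zero, Real.sqrt_sq (hp i).le, ← two_mul,
    div_self (by positivity [hp i]), mul_one]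

theorem strictMonoOn_rootBalance [Nonempty (Fin m)] (hn : ∀ i, 0 < n i) (hp : ∀ i, 0 < p i)
    (hq : ∀ i, q i ≠ 0) :
    StrictMonoOn (rootBalance m n p q) {c | ∀ i, q i ^ 2 * c ≤ p i ^ 2} := by
  intro c hc d hd hcd
  refine Finset.sum_lt_sum_of_nonempty Finset.univ_nonempty fun i _ => ?_
  have hn0 : (0 : ℝ) < n i := by exact_mod_cast hn i
  exact mul_lt_mul_of_pos_left
    (strictMonoOn_two_mul_div_add_sqrt (hp i) (by positivity [hq i]) (hc i) (hd i) hcd) hn0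

theorem exists_rootBalance_eq [Nonempty (Fin m)] (hn : ∀ i, 0 < n i) (hp : ∀ i, 0 < p i)
    (hq : ∀ i, q i ≠ 0) :
    ∃ c, 0 < c ∧ (∀ i, q i ^ 2 * c ≤ p i ^ 2) ∧ rootBalance m n p q c = ∑ i, (n i : ℝ) + 1 := by
  obtain ⟨i₀, -, hi₀⟩ :=
    Finset.exists_min_image Finset.univ (fun i => p i ^ 2 / q i ^ 2) Finset.univ_nonempty
  set cmax := p i₀ ^ 2 / q i₀ ^ 2
  have hq2 : ∀ i, 0 < q i ^ 2 := fun i => by positivity [hq i]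
  have hcmax : ∀ i, q i ^ 2 * cmax ≤ p i ^ 2 := fun i => by
    rw [← le_div_iff₀' (hq2 i)]
    exact hi₀ i (Finset.mem_univ i)
  have hcmax0 : 0 ≤ cmax := by positivity
  have hmax : ∑ i, (n i : ℝ) + 1 ≤ rootBalance m n p q cmax := by
    have hr₀ : 2 * p i₀ / (p i₀ + √(p i₀ ^ 2 - q i₀ ^ 2 * cmax)) = 2 := by
      rw [mul_div_cancel₀ _ (hq2 i₀).ne', sub_self, Real.sqrt_zero, add_zero,
        mul_div_cancel_right₀ _ (hp i₀).ne']
    have hexcess := Finset.single_le_sum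
      (f := fun i => (n i : ℝ) * (2 * p i / (p i + √(p i ^ 2 - q i ^ 2 * cmax)) - 1))
      (fun i _ => mul_nonneg (Nat.cast_nonneg _)
        (sub_nonneg.2 (one_le_two_mul_div_add_sqrt (hp i) (by positivity))))
      (Finset.mem_univ i₀)
    have hn₀ : (1 : ℝ) ≤ n i₀ := by exact_mod_cast hn i₀
    simp only [hr₀, mul_sub, mul_one, Finset.sum_sub_distrib] at hexcess
    rw [rootBalance]
    linarith
  obtain ⟨c, ⟨hc0, hc⟩, hψ⟩ := intermediate_value_Icc hcmax0
    (continuous_rootBalance hp).continuousOn ⟨by rw [rootBalance_zero hp]; linarith, hmax⟩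
  refine ⟨c, hc0.lt_of_ne ?_, fun i => ?_, hψ⟩
  · rintro rfl
    rw [rootBalance_zero hp] at hψ
    linarith
  · exact (mul_le_mul_of_nonneg_left hc (hq2 i).le).trans (hcmax i)

theorem flowE_smallRoot {c : ℝ} (hp : ∀ i, 0 < p i) (hc : ∀ i, q i ^ 2 * c ≤ p i ^ 2) :
    flowE m n q (fun i => smallRoot (p i) (q i ^ 2) c)
      = c * (rootBalance m n p q c - ∑ i, (n i : ℝ)) := by
  rw [flowE, rootBalance, mul_sub, Finset.mul_sum, Finset.mul_sum, ← Finset.sum_sub_distrib]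
  refine Finset.sum_congr rfl fun i _ => ?_
  have h := two_mul_mul_smallRoot_sub (hp i) (hc i)
  rw [two_mul_mul_smallRoot] at h
  linear_combination (-(n i : ℝ)) * h

theorem flowF_smallRoot_eq_zero {c : ℝ} (hp : ∀ i, 0 < p i) (hc : ∀ i, q i ^ 2 * c ≤ p i ^ 2)
    (hψ : rootBalance m n p q c = ∑ i, (n i : ℝ) + 1) (i : Fin m) :
    flowF m n p q i (fun i => smallRoot (p i) (q i ^ 2) c) = 0 := by
  rw [flowF, flowE_smallRoot hp hc, hψ, add_sub_cancel_left, mul_one]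
  exact sub_eq_zero.2 (two_mul_mul_smallRoot_sub (hp i) (hc i))

variable {Y : Fin m → ℝ}

theorem sq_mul_le_of_flowF_eq_zero (hn : ∀ i, 0 < n i) (hY : ∀ i, 0 < Y i)
    (hF : ∀ i, flowF m n p q i Y = 0) (i : Fin m) : q i ^ 2 * Y i ≤ p i := by
  have hn₀ : (1 : ℝ) ≤ n i := by exact_mod_cast hn i
  have hE : q i ^ 2 * Y i ^ 2 ≤ flowE m n q Y :=
    calc q i ^ 2 * Y i ^ 2 ≤ n i * q i ^ 2 * Y i ^ 2 := by
          rw [mul_assoc]; exact le_mul_of_one_le_left (by positivity) hn₀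
      _ ≤ flowE m n q Y := Finset.single_le_sum (f := fun j => (n j : ℝ) * q j ^ 2 * Y j ^ 2)
          (fun j _ => by positivity) (Finset.mem_univ i)
  have h := hF i
  rw [flowF] at h
  nlinarith [hY i]

theorem eq_smallRoot_flowE (hn : ∀ i, 0 < n i) (hp : ∀ i, 0 < p i) (hY : ∀ i, 0 < Y i)
    (hF : ∀ i, flowF m n p q i Y = 0) :
    Y = fun i => smallRoot (p i) (q i ^ 2) (flowE m n q Y) :=
  funext fun i => eq_smallRoot (hp i) (sq_mul_le_of_flowF_eq_zero hn hY hF i)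
    (sub_eq_zero.1 (hF i))

theorem rootBalance_flowE [Nonempty (Fin m)] (hn : ∀ i, 0 < n i) (hp : ∀ i, 0 < p i)
    (hY : ∀ i, 0 < Y i) (hF : ∀ i, flowF m n p q i Y = 0) :
    rootBalance m n p q (flowE m n q Y) = ∑ i, (n i : ℝ) + 1 := by
  have hE : 0 < flowE m n q Y := by
    let i := Classical.arbitrary (Fin m)
    have h := sub_eq_zero.1 (hF i)
    nlinarith [hY i, hp i, sq_mul_le_of_flowF_eq_zero hn hY hF i]
  have h := flowE_smallRoot (n := n) hp fun i =>
    mul_le_sq_of_two_mul_mul_sub (sub_eq_zero.1 (hF i))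
  rw [← eq_smallRoot_flowE hn hp hY hF] at h
  have := mul_left_cancel₀ hE.ne' (h.symm.trans (mul_one _).symm)
  linarith

end rootBalance

/-- unique positive solution ξ of F(ξ)=0 (the Einstein point). -/
theorem stmt3 (m : ℕ) (n : Fin m → ℕ) (p q : Fin m → ℝ)
    (hn : ∀ i, 0 < n i) (hp : ∀ i, 0 < p i) (hq : ∀ i, q i ≠ 0) :
    ∃! ξ : Fin m → ℝ, (∀ i, 0 < ξ i) ∧ ∀ i, flowF m n p q i ξ = 0 := by
  rcases isEmpty_or_nonempty (Fin m) with hm | hm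
  · exact ⟨fun _ => 1, ⟨isEmptyElim, isEmptyElim⟩, fun _ _ => Subsingleton.elim _ _⟩
  obtain ⟨c, hc0, hc, hψ⟩ := exists_rootBalance_eq hn hp hq
  refine ⟨_, ⟨fun i => smallRoot_pos (hp i) hc0, flowF_smallRoot_eq_zero hp hc hψ⟩, ?_⟩
  rintro Y ⟨hY, hF⟩
  have hS : ∀ i, q i ^ 2 * flowE m n q Y ≤ p i ^ 2 :=
    fun i => mul_le_sq_of_two_mul_mul_sub (sub_eq_zero.1 (hF i))
  rw [eq_smallRoot_flowE hn hp hY hF, (strictMonoOn_rootBalance hn hp hq).injOn hS hc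
    ((rootBalance_flowE hn hp hY hF).trans hψ.symm)]
end

section
/- With E, Fᵢ and ξ as above (Fᵢ(ξ)=0, ξᵢ>0), if k ∈ {1,...,m−1} and v is the unique point with v₁,...,v_k > 0, F₁(v)=...=F_k(v)=0, v_{k+1}=...=v_m=0, then F_j(v) = −Σ_{l=1}^k n_l q_l² v_l² < 0 for every j ≥ k+1; in particular v ∉ Ω₊. -/
open BigOperators

/-- Ω₊ = {Y ∈ ℝ^m : Yᵢ ≥ 0 and Fᵢ(Y) ≥ 0 for all i}. -/
def OmegaPlus (m : ℕ) (n : Fin m → ℕ) (p q : Fin m → ℝ) : Set (Fin m → ℝ) :=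
  {Y | ∀ i, 0 ≤ Y i ∧ 0 ≤ flowF m n p q i Y}

section Flow

variable {m : ℕ} {n : Fin m → ℕ} {p q : Fin m → ℝ} {Y : Fin m → ℝ}

lemma flowE_eq_sum_of_eq_zero_of_notMem (s : Finset (Fin m)) (hY : ∀ i ∉ s, Y i = 0) :
    flowE m n q Y = ∑ l ∈ s, (n l : ℝ) * q l ^ 2 * Y l ^ 2 := by
  refine (Finset.sum_subset (Finset.subset_univ s) fun l _ hl => ?_).symm
  simp [hY l hl]

lemma flowE_pos_of_ne_zero (i : Fin m) (hn : n i ≠ 0) (hq : q i ≠ 0) (hY : Y i ≠ 0) :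
    0 < flowE m n q Y :=
  Finset.sum_pos' (fun j _ => by positivity) ⟨i, Finset.mem_univ i, by positivity⟩

lemma flowF_eq_neg_flowE_of_eq_zero {i : Fin m} (hY : Y i = 0) :
    flowF m n p q i Y = -flowE m n q Y := by
  simp [flowF, hY]

lemma notMem_OmegaPlus_of_flowF_neg {i : Fin m} (h : flowF m n p q i Y < 0) :
    Y ∉ OmegaPlus m n p q :=
  fun hY => (hY i).2.not_gt h

end Flow

theorem stmt6_general (m k : ℕ) (hk : 0 < k) (hkm : k < m)
    (n : Fin m → ℕ) (p q : Fin m → ℝ)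
    (hn : ∀ i, 0 < n i) (hq : ∀ i, q i ≠ 0)
    (v : Fin m → ℝ)
    (hv1 : ∀ i : Fin m, (i : ℕ) < k → 0 < v i ∧ flowF m n p q i v = 0)
    (hv2 : ∀ i : Fin m, k ≤ (i : ℕ) → v i = 0) :
    (∀ j : Fin m, k ≤ (j : ℕ) →
      flowF m n p q j v
        = -(∑ l ∈ Finset.univ.filter (fun l : Fin m => (l : ℕ) < k),
            (n l : ℝ) * q l ^ 2 * v l ^ 2) ∧
      flowF m n p q j v < 0) ∧
    v ∉ OmegaPlus m n p q := by
  have hE : flowE m n q v = ∑ l ∈ Finset.univ.filter (fun l : Fin m => (l : ℕ) < k),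
      (n l : ℝ) * q l ^ 2 * v l ^ 2 :=
    flowE_eq_sum_of_eq_zero_of_notMem _ fun i hi => hv2 i (by simpa using hi)
  have hEpos : 0 < flowE m n q v :=
    flowE_pos_of_ne_zero ⟨0, hk.trans hkm⟩ (hn _).ne' (hq _) (hv1 _ hk).1.ne'
  have hneg : ∀ j : Fin m, k ≤ (j : ℕ) → flowF m n p q j v = -flowE m n q v ∧
      flowF m n p q j v < 0 := fun j hj => by
    rw [flowF_eq_neg_flowE_of_eq_zero (hv2 j hj)]
    exact ⟨rfl, neg_neg_of_pos hEpos⟩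
  refine ⟨fun j hj => hE ▸ hneg j hj, ?_⟩
  exact notMem_OmegaPlus_of_flowF_neg (hneg ⟨k, hkm⟩ le_rfl).2

/-- for the partial zero v (positive on first k coordinates, zero on the
rest), F_j(v) = −Σ_{l<k} n_l q_l² v_l² < 0 for j ≥ k; in particular v ∉ Ω₊. -/
theorem stmt6 (m k : ℕ) (hk : 0 < k) (hkm : k < m)
    (n : Fin m → ℕ) (p q : Fin m → ℝ)
    (hn : ∀ i, 0 < n i) (hp : ∀ i, 0 < p i) (hq : ∀ i, q i ≠ 0)
    (v : Fin m → ℝ)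
    (hv1 : ∀ i : Fin m, (i : ℕ) < k → 0 < v i ∧ flowF m n p q i v = 0)
    (hv2 : ∀ i : Fin m, k ≤ (i : ℕ) → v i = 0) :
    (∀ j : Fin m, k ≤ (j : ℕ) →
      flowF m n p q j v
        = -(∑ l ∈ Finset.univ.filter (fun l : Fin m => (l : ℕ) < k),
            (n l : ℝ) * q l ^ 2 * v l ^ 2) ∧
      flowF m n p q j v < 0) ∧
    v ∉ OmegaPlus m n p q :=
  stmt6_general m k hk hkm n p q hn hq v hv1 hv2
end

section
/- Let n = 1 + Σᵢ 2nᵢ and define λ̄(Y) = (∏ᵢ Yᵢ^{−2nᵢ/n}) · Σᵢ(2nᵢpᵢYᵢ − (1/2)nᵢqᵢ²Yᵢ²) for Y ∈ ℝ^m_{>0}. If Y(u) solves dYᵢ/du = −YᵢFᵢ(Y), then (∏ᵢYᵢ^{−2nᵢ/n})^{−1} · d/du λ̄(Y(u)) = (2/n)(2Σᵢ nᵢpᵢYᵢ − E(Y)/2)² − E(Y)²/2 − Σᵢ nᵢYᵢ²(2pᵢ − qᵢ²Yᵢ)². -/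
open BigOperators

/-- n = 1 + Σᵢ 2nᵢ. -/
def nTot (m : ℕ) (n : Fin m → ℕ) : ℝ := 1 + ∑ i, 2 * (n i : ℝ)

/-- λ̄(Y) = (∏ᵢ Yᵢ^{−2nᵢ/n}) · Σᵢ (2nᵢpᵢYᵢ − ½nᵢqᵢ²Yᵢ²). -/
noncomputable def lamBar (m : ℕ) (n : Fin m → ℕ) (p q : Fin m → ℝ) (Y : Fin m → ℝ) : ℝ :=
  (∏ i, Y i ^ (-(2 * (n i : ℝ)) / nTot m n)) *
    ∑ i, (2 * (n i : ℝ) * p i * Y i - (1 / 2) * (n i : ℝ) * q i ^ 2 * Y i ^ 2)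

/-! Writing `aᵢ = Yᵢ (2pᵢ - qᵢ²Yᵢ)` (`flowA`), one has `Fᵢ = aᵢ - E`. Along the flow the logarithmic
derivative of `∏ Yᵢ^{-2nᵢ/n}` is `(2/n) Σ nᵢFᵢ`, and the derivative of the sum in `λ̄` is
`-Σ nᵢaᵢFᵢ`. Both, as well as that sum itself, are expressed through `Σ nᵢpᵢYᵢ`, `E`, `Σ nᵢ` and
`Σ nᵢaᵢ²`, and with `n = 1 + 2 Σ nᵢ` the claimed formula becomes a rational identity. -/

open Finset

theorem HasDerivAt.finset_prod_rpow_const {ι : Type*} {s : Finset ι} {f : ι → ℝ → ℝ}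
    {f' α : ι → ℝ} {x : ℝ} (hf : ∀ i ∈ s, HasDerivAt (f i) (f' i) x)
    (hx : ∀ i ∈ s, f i x ≠ 0) :
    HasDerivAt (fun y => ∏ i ∈ s, f i y ^ α i)
      ((∏ i ∈ s, f i x ^ α i) * ∑ i ∈ s, α i * f' i / f i x) x := by
  classical
  have hpow : ∀ i ∈ s, HasDerivAt (fun y => f i y ^ α i) (f' i * α i * f i x ^ (α i - 1)) x :=
    fun i hi => (hf i hi).rpow_const (Or.inl (hx i hi))
  refine (HasDerivAt.fun_finsetProd hpow).congr_deriv ?_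
  rw [mul_sum]
  refine sum_congr rfl fun i hi => ?_
  rw [← mul_prod_erase s _ hi, Real.rpow_sub_one (hx i hi), smul_eq_mul]
  field_simp

section Flow

variable {m : ℕ} (n : Fin m → ℕ) (p q : Fin m → ℝ)

def flowA (p q : Fin m → ℝ) (i : Fin m) (Y : Fin m → ℝ) : ℝ :=
  Y i * (2 * p i - q i ^ 2 * Y i)

theorem flowF_eq (i : Fin m) (Y : Fin m → ℝ) :
    flowF m n p q i Y = flowA p q i Y - flowE m n q Y := by
  rw [flowF, flowA]
  ring

theorem nTot_eq : nTot m n = 1 + 2 * ∑ i, (n i : ℝ) := by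
  rw [nTot, mul_sum]

theorem sum_mul_flowA (Y : Fin m → ℝ) :
    ∑ i, (n i : ℝ) * flowA p q i Y = 2 * ∑ i, (n i : ℝ) * p i * Y i - flowE m n q Y := by
  rw [flowE, mul_sum, ← sum_sub_distrib]
  exact sum_congr rfl fun i _ => by rw [flowA]; ring

theorem sum_lamBar_eq (Y : Fin m → ℝ) :
    ∑ i, (2 * (n i : ℝ) * p i * Y i - (1 / 2) * (n i : ℝ) * q i ^ 2 * Y i ^ 2) =
      2 * ∑ i, (n i : ℝ) * p i * Y i - flowE m n q Y / 2 := by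
  rw [flowE, mul_sum, sum_div, ← sum_sub_distrib]
  exact sum_congr rfl fun i _ => by ring

theorem sum_mul_flowF (Y : Fin m → ℝ) :
    ∑ i, (n i : ℝ) * flowF m n p q i Y =
      2 * ∑ i, (n i : ℝ) * p i * Y i - (1 + ∑ i, (n i : ℝ)) * flowE m n q Y := by
  calc ∑ i, (n i : ℝ) * flowF m n p q i Y
      = ∑ i, (n i : ℝ) * flowA p q i Y - (∑ i, (n i : ℝ)) * flowE m n q Y := by
        simp only [flowF_eq, mul_sub, sum_sub_distrib, sum_mul]
    _ = _ := by rw [sum_mul_flowA]; ring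

theorem sum_mul_flowA_mul_flowF (Y : Fin m → ℝ) :
    ∑ i, (n i : ℝ) * flowA p q i Y * flowF m n p q i Y =
      ∑ i, (n i : ℝ) * Y i ^ 2 * (2 * p i - q i ^ 2 * Y i) ^ 2 -
        flowE m n q Y * (2 * ∑ i, (n i : ℝ) * p i * Y i - flowE m n q Y) := by
  rw [← sum_mul_flowA, mul_sum, ← sum_sub_distrib]
  exact sum_congr rfl fun i _ => by rw [flowF_eq, flowA]; ring

variable {Y : ℝ → Fin m → ℝ} {u : ℝ}

theorem hasDerivAt_prod_rpow_of_flow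
    (hd : ∀ i, HasDerivAt (fun s => Y s i) (-(Y u i) * flowF m n p q i (Y u)) u)
    (hne : ∀ i, Y u i ≠ 0) :
    HasDerivAt (fun s => ∏ i, Y s i ^ (-(2 * (n i : ℝ)) / nTot m n))
      ((∏ i, Y u i ^ (-(2 * (n i : ℝ)) / nTot m n)) *
        (2 / nTot m n * ∑ i, (n i : ℝ) * flowF m n p q i (Y u))) u := by
  convert HasDerivAt.finset_prod_rpow_const (fun i _ => hd i) (fun i _ => hne i) using 2
  rw [mul_sum]
  exact sum_congr rfl fun i _ => by field_simp [hne i]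

theorem hasDerivAt_sum_lamBar_of_flow
    (hd : ∀ i, HasDerivAt (fun s => Y s i) (-(Y u i) * flowF m n p q i (Y u)) u) :
    HasDerivAt
      (fun s => ∑ i, (2 * (n i : ℝ) * p i * Y s i - (1 / 2) * (n i : ℝ) * q i ^ 2 * Y s i ^ 2))
      (-∑ i, (n i : ℝ) * flowA p q i (Y u) * flowF m n p q i (Y u)) u := by
  rw [← sum_neg_distrib]
  refine HasDerivAt.fun_sum fun i _ => ?_
  refine (((hd i).const_mul (2 * (n i : ℝ) * p i)).fun_sub
    (((hd i).fun_pow 2).const_mul ((1 / 2) * (n i : ℝ) * q i ^ 2))).congr_deriv ?_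
  rw [flowA]
  push_cast
  ring

end Flow

theorem stmt7_general (m : ℕ) (n : Fin m → ℕ) (p q : Fin m → ℝ)
    (Y : ℝ → Fin m → ℝ) (u : ℝ)
    (hpos : ∀ i, 0 < Y u i)
    (hd : ∀ i, HasDerivAt (fun s => Y s i) (-(Y u i) * flowF m n p q i (Y u)) u) :
    HasDerivAt (fun s => lamBar m n p q (Y s))
      ((∏ i, (Y u i) ^ (-(2 * (n i : ℝ)) / nTot m n)) *
        ((2 / nTot m n) * (2 * (∑ i, (n i : ℝ) * p i * Y u i) - flowE m n q (Y u) / 2) ^ 2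
          - (flowE m n q (Y u)) ^ 2 / 2
          - ∑ i, (n i : ℝ) * (Y u i) ^ 2 * (2 * p i - q i ^ 2 * Y u i) ^ 2)) u := by
  refine ((hasDerivAt_prod_rpow_of_flow n p q hd fun i => (hpos i).ne').fun_mul
    (hasDerivAt_sum_lamBar_of_flow n p q hd)).congr_deriv ?_
  have hN : (1 : ℝ) + 2 * ∑ i, (n i : ℝ) ≠ 0 := by positivity
  rw [sum_lamBar_eq, sum_mul_flowF, sum_mul_flowA_mul_flowF, nTot_eq]
  field_simp
  ring

/-- derivative formula for λ̄ along the flow dYᵢ/du = −YᵢFᵢ(Y). -/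
theorem stmt7 (m : ℕ) (n : Fin m → ℕ) (p q : Fin m → ℝ)
    (hn : ∀ i, 0 < n i) (hp : ∀ i, 0 < p i) (hq : ∀ i, q i ≠ 0)
    (Y : ℝ → Fin m → ℝ) (u : ℝ)
    (hpos : ∀ i, 0 < Y u i)
    (hd : ∀ i, HasDerivAt (fun s => Y s i) (-(Y u i) * flowF m n p q i (Y u)) u) :
    HasDerivAt (fun s => lamBar m n p q (Y s))
      ((∏ i, (Y u i) ^ (-(2 * (n i : ℝ)) / nTot m n)) *
        ((2 / nTot m n) * (2 * (∑ i, (n i : ℝ) * p i * Y u i) - flowE m n q (Y u) / 2) ^ 2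
          - (flowE m n q (Y u)) ^ 2 / 2
          - ∑ i, (n i : ℝ) * (Y u i) ^ 2 * (2 * p i - q i ^ 2 * Y u i) ^ 2)) u :=
  stmt7_general m n p q Y u hpos hd
end

section
/- For Y ∈ ℝ^m_{>0}, with n = 1 + Σᵢ2nᵢ, the inequality (2/n)(2Σᵢ nᵢpᵢYᵢ − E(Y)/2)² − E(Y)²/2 − Σᵢ nᵢYᵢ²(2pᵢ − qᵢ²Yᵢ)² ≤ −( (1/√n)(Σᵢ nᵢYᵢ²(2pᵢ−qᵢ²Yᵢ)²)^{1/2} − √((n−1)/(2n)) E(Y) )² ≤ 0 holds, with equality in the first inequality (i.e. the left side equal to 0) only if Fᵢ(Y) = 0 for every i. -/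
open BigOperators

/-!
Write `aᵢ = Yᵢ (2pᵢ − qᵢ²Yᵢ)`, so that `Fᵢ(Y) = aᵢ − E`, and put `W = Σ nᵢ`, `T = Σ nᵢaᵢ`,
`S = Σ nᵢaᵢ²`; then `n = 1 + 2W` and `2 Σ nᵢpᵢYᵢ − E/2 = T + E/2`. In these variables the left
side equals `−(√S − √W E)²/n − (2/n)((WS − T²) + E(√(WS) − T))`, and both brackets are
nonnegative by the weighted Cauchy–Schwarz inequality `T² ≤ WS`. If the left side vanishes, so do
all three terms, which forces `S = WE²` and `T = WE`; hence `Σ nᵢ(aᵢ − E)² = S − 2ET + WE² = 0`.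
-/

open Finset Real

theorem sum_mul_sub_sq {ι : Type*} (s : Finset ι) (w a : ι → ℝ) (c : ℝ) :
    ∑ i ∈ s, w i * (a i - c) ^ 2 =
      ∑ i ∈ s, w i * a i ^ 2 - 2 * c * ∑ i ∈ s, w i * a i + c ^ 2 * ∑ i ∈ s, w i := by
  rw [mul_sum, mul_sum, ← sum_sub_distrib, ← sum_add_distrib]
  exact sum_congr rfl fun i _ => by ring

theorem sq_sum_mul_le_sum_mul_sum_mul_sq {ι : Type*} (s : Finset ι) {w : ι → ℝ}
    (hw : ∀ i ∈ s, 0 ≤ w i) (a : ι → ℝ) :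
    (∑ i ∈ s, w i * a i) ^ 2 ≤ (∑ i ∈ s, w i) * ∑ i ∈ s, w i * a i ^ 2 :=
  sum_sq_le_sum_mul_sum_of_sq_le_mul s hw (fun i hi => mul_nonneg (hw i hi) (sq_nonneg _))
    fun i _ => (by ring : (w i * a i) ^ 2 = w i * (w i * a i ^ 2)).le

section Estimate

noncomputable def cauchySchwarzDefect (W E S T : ℝ) : ℝ := (W * S - T ^ 2) + E * (√(W * S) - T)

variable {N W E S T : ℝ}

theorem cauchySchwarzDefect_nonneg (hE : 0 ≤ E) (hT : T ^ 2 ≤ W * S) :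
    0 ≤ cauchySchwarzDefect W E S T :=
  add_nonneg (sub_nonneg.2 hT) (mul_nonneg hE (sub_nonneg.2 (le_sqrt_of_sq_le hT)))

theorem eq_mul_of_cauchySchwarzDefect_eq_zero (hW : 0 ≤ W) (hE : 0 ≤ E)
    (hT : T ^ 2 ≤ W * S) (hroot : √S = √W * E) (h : cauchySchwarzDefect W E S T = 0) :
    T = W * E := by
  rw [cauchySchwarzDefect, add_eq_zero_iff_of_nonneg (sub_nonneg.2 hT)
    (mul_nonneg hE (sub_nonneg.2 (le_sqrt_of_sq_le hT)))] at h
  obtain ⟨hCS, hdev⟩ := h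
  rw [sqrt_mul hW, hroot, ← mul_assoc, mul_self_sqrt hW] at hdev
  rcases mul_eq_zero.1 hdev with hE0 | hdev
  · have hS : S ≤ 0 := sqrt_eq_zero'.1 (by rw [hroot, hE0, mul_zero])
    have hT0 : T ^ 2 = 0 := le_antisymm (by nlinarith [mul_nonpos_of_nonneg_of_nonpos hW hS])
      (sq_nonneg T)
    rw [pow_eq_zero_iff two_ne_zero |>.1 hT0, hE0, mul_zero]
  · linarith

theorem sq_sub_sqrt_ratio_mul (hW : 0 ≤ W) (hN : N = 1 + 2 * W) :
    (1 / √N * √S - √((N - 1) / (2 * N)) * E) ^ 2 = (√S - √W * E) ^ 2 / N := by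
  have hNpos : 0 < N := by linarith
  have hratio : (N - 1) / (2 * N) = W / N := by field_simp; linarith
  have hsqrtN := (sqrt_pos.2 hNpos).ne'
  rw [hratio, sqrt_div' _ hNpos.le]
  field_simp
  rw [sq_sqrt hNpos.le, mul_comm]

theorem estimate_eq_neg_sq_sub (hW : 0 ≤ W) (hS : 0 ≤ S) (hN : N = 1 + 2 * W) :
    2 / N * (T + E / 2) ^ 2 - E ^ 2 / 2 - S =
      -(√S - √W * E) ^ 2 / N - 2 / N * cauchySchwarzDefect W E S T := by
  have hNpos : 0 < N := by linarith
  rw [cauchySchwarzDefect, sqrt_mul hW]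
  field_simp
  linear_combination 2 * sq_sqrt hS + 2 * E ^ 2 * sq_sqrt hW - (E ^ 2 + 2 * S) * hN

theorem estimate_le_neg_sq (hW : 0 ≤ W) (hS : 0 ≤ S) (hN : N = 1 + 2 * W) (hE : 0 ≤ E)
    (hT : T ^ 2 ≤ W * S) :
    2 / N * (T + E / 2) ^ 2 - E ^ 2 / 2 - S ≤
      -(1 / √N * √S - √((N - 1) / (2 * N)) * E) ^ 2 := by
  have hNpos : 0 < N := by linarith
  rw [estimate_eq_neg_sq_sub hW hS hN, sq_sub_sqrt_ratio_mul hW hN, neg_div, sub_le_self_iff]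
  exact mul_nonneg (by positivity) (cauchySchwarzDefect_nonneg hE hT)

theorem moments_eq_of_estimate_eq_zero (hW : 0 ≤ W) (hS : 0 ≤ S) (hN : N = 1 + 2 * W)
    (hE : 0 ≤ E) (hT : T ^ 2 ≤ W * S) (h : 2 / N * (T + E / 2) ^ 2 - E ^ 2 / 2 - S = 0) :
    S = W * E ^ 2 ∧ T = W * E := by
  have hNpos : 0 < N := by linarith
  have hsq0 : 0 ≤ (√S - √W * E) ^ 2 / N := by positivity
  have hdefect0 : 0 ≤ 2 / N * cauchySchwarzDefect W E S T :=
    mul_nonneg (by positivity) (cauchySchwarzDefect_nonneg hE hT)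
  rw [estimate_eq_neg_sq_sub hW hS hN, neg_div] at h
  have hsq : (√S - √W * E) ^ 2 / N = 0 := by linarith
  have hdefect : cauchySchwarzDefect W E S T = 0 :=
    (mul_eq_zero.1 (by linarith : 2 / N * cauchySchwarzDefect W E S T = 0)).resolve_left
      (by positivity)
  have hroot : √S = √W * E := sub_eq_zero.1 (pow_eq_zero_iff two_ne_zero |>.1
    ((div_eq_zero_iff.1 hsq).resolve_right hNpos.ne'))
  refine ⟨?_, eq_mul_of_cauchySchwarzDefect_eq_zero hW hE hT hroot hdefect⟩
  rw [← sq_sqrt hS, hroot, mul_pow, sq_sqrt hW]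

end Estimate

theorem stmt8_general (m : ℕ) (n : Fin m → ℕ) (p q : Fin m → ℝ)
    (hn : ∀ i, 0 < n i)
    (Y : Fin m → ℝ) :
    ((2 / nTot m n) * (2 * (∑ i, (n i : ℝ) * p i * Y i) - flowE m n q Y / 2) ^ 2
        - (flowE m n q Y) ^ 2 / 2
        - ∑ i, (n i : ℝ) * (Y i) ^ 2 * (2 * p i - q i ^ 2 * Y i) ^ 2
      ≤ -((1 / Real.sqrt (nTot m n)) *
            Real.sqrt (∑ i, (n i : ℝ) * (Y i) ^ 2 * (2 * p i - q i ^ 2 * Y i) ^ 2)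
          - Real.sqrt ((nTot m n - 1) / (2 * nTot m n)) * flowE m n q Y) ^ 2) ∧
    (-((1 / Real.sqrt (nTot m n)) *
          Real.sqrt (∑ i, (n i : ℝ) * (Y i) ^ 2 * (2 * p i - q i ^ 2 * Y i) ^ 2)
        - Real.sqrt ((nTot m n - 1) / (2 * nTot m n)) * flowE m n q Y) ^ 2 ≤ 0) ∧
    (((2 / nTot m n) * (2 * (∑ i, (n i : ℝ) * p i * Y i) - flowE m n q Y / 2) ^ 2
        - (flowE m n q Y) ^ 2 / 2
        - ∑ i, (n i : ℝ) * (Y i) ^ 2 * (2 * p i - q i ^ 2 * Y i) ^ 2 = 0)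
      → ∀ i, flowF m n p q i Y = 0) := by
  set a : Fin m → ℝ := fun i => Y i * (2 * p i - q i ^ 2 * Y i)
  have hw : ∀ i ∈ univ, (0 : ℝ) ≤ n i := fun i _ => Nat.cast_nonneg _
  have hN : nTot m n = 1 + 2 * ∑ i, (n i : ℝ) := by rw [nTot, mul_sum]
  have hS : ∑ i, (n i : ℝ) * Y i ^ 2 * (2 * p i - q i ^ 2 * Y i) ^ 2 = ∑ i, (n i : ℝ) * a i ^ 2 :=
    sum_congr rfl fun i _ => by ring
  have hT : 2 * ∑ i, (n i : ℝ) * p i * Y i - flowE m n q Y / 2 =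
      ∑ i, (n i : ℝ) * a i + flowE m n q Y / 2 := by
    rw [flowE, mul_sum, sub_eq_iff_eq_add, add_assoc, add_halves, ← sum_add_distrib]
    exact sum_congr rfl fun i _ => by ring
  have hS0 : 0 ≤ ∑ i, (n i : ℝ) * a i ^ 2 := sum_nonneg fun i _ => by positivity
  have hE0 : 0 ≤ flowE m n q Y := sum_nonneg fun i _ => by positivity
  have hCS := sq_sum_mul_le_sum_mul_sum_mul_sq univ hw a
  rw [hS, hT]
  refine ⟨estimate_le_neg_sq (sum_nonneg hw) hS0 hN hE0 hCS, neg_nonpos.2 (sq_nonneg _),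
    fun h i => ?_⟩
  obtain ⟨hSW, hTW⟩ := moments_eq_of_estimate_eq_zero (sum_nonneg hw) hS0 hN hE0 hCS h
  have hvar : ∑ j, (n j : ℝ) * (a j - flowE m n q Y) ^ 2 = 0 := by
    rw [sum_mul_sub_sq, hSW, hTW]; ring
  have hterm := (sum_eq_zero_iff_of_nonneg fun j _ => by positivity).1 hvar i (mem_univ i)
  have hai := pow_eq_zero_iff two_ne_zero |>.1
    ((mul_eq_zero.1 hterm).resolve_left (Nat.cast_ne_zero.2 (hn i).ne'))
  rw [flowF, ← hai]
  ring

/-- the monotonicity estimate for λ̄ along the flow, with equality case. -/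
theorem stmt8 (m : ℕ) (n : Fin m → ℕ) (p q : Fin m → ℝ)
    (hn : ∀ i, 0 < n i) (hp : ∀ i, 0 < p i) (hq : ∀ i, q i ≠ 0)
    (Y : Fin m → ℝ) (hpos : ∀ i, 0 < Y i) :
    ((2 / nTot m n) * (2 * (∑ i, (n i : ℝ) * p i * Y i) - flowE m n q Y / 2) ^ 2
        - (flowE m n q Y) ^ 2 / 2
        - ∑ i, (n i : ℝ) * (Y i) ^ 2 * (2 * p i - q i ^ 2 * Y i) ^ 2
      ≤ -((1 / Real.sqrt (nTot m n)) *
            Real.sqrt (∑ i, (n i : ℝ) * (Y i) ^ 2 * (2 * p i - q i ^ 2 * Y i) ^ 2)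
          - Real.sqrt ((nTot m n - 1) / (2 * nTot m n)) * flowE m n q Y) ^ 2) ∧
    (-((1 / Real.sqrt (nTot m n)) *
          Real.sqrt (∑ i, (n i : ℝ) * (Y i) ^ 2 * (2 * p i - q i ^ 2 * Y i) ^ 2)
        - Real.sqrt ((nTot m n - 1) / (2 * nTot m n)) * flowE m n q Y) ^ 2 ≤ 0) ∧
    (((2 / nTot m n) * (2 * (∑ i, (n i : ℝ) * p i * Y i) - flowE m n q Y / 2) ^ 2
        - (flowE m n q Y) ^ 2 / 2
        - ∑ i, (n i : ℝ) * (Y i) ^ 2 * (2 * p i - q i ^ 2 * Y i) ^ 2 = 0)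
      → ∀ i, flowF m n p q i Y = 0) :=
  stmt8_general m n p q hn Y
end

section
/- Let Y, ξ ∈ ℝ^m with Fᵢ(ξ) = 0 for all i, Fᵢ(Y) ≥ 0 for all i, and Yᵢ > ξᵢ > 0 for all i. Then 2pᵢ − (nᵢ+1)qᵢ²(Yᵢ + ξᵢ) ≥ 0 for every i, and in particular ξᵢ < pᵢ/((nᵢ+1)qᵢ²) for every i. -/
open BigOperators

/-- if F(ξ)=0, F(Y) ≥ 0 and Y > ξ > 0 componentwise, then
2pᵢ − (nᵢ+1)qᵢ²(Yᵢ+ξᵢ) ≥ 0 and ξᵢ < pᵢ/((nᵢ+1)qᵢ²). -/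
theorem stmt15 (m : ℕ) (n : Fin m → ℕ) (p q : Fin m → ℝ)
    (hn : ∀ i, 0 < n i) (hp : ∀ i, 0 < p i) (hq : ∀ i, q i ≠ 0)
    (Y ξ : Fin m → ℝ) (hξpos : ∀ i, 0 < ξ i)
    (hFξ : ∀ i, flowF m n p q i ξ = 0)
    (hFY : ∀ i, 0 ≤ flowF m n p q i Y)
    (hYgt : ∀ i, ξ i < Y i) :
    ∀ i, 0 ≤ 2 * p i - ((n i : ℝ) + 1) * q i ^ 2 * (Y i + ξ i) ∧
      ξ i < p i / (((n i : ℝ) + 1) * q i ^ 2) := by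
  intro i
  set A : ℝ := 2 * p i - ((n i : ℝ) + 1) * q i ^ 2 * (Y i + ξ i) with hA
  have hSnn : 0 ≤ ∑ j ∈ Finset.univ.erase i,
      (n j : ℝ) * q j ^ 2 * (Y j ^ 2 - ξ j ^ 2) := by
    apply Finset.sum_nonneg
    intro j _
    have h1 : 0 ≤ (n j : ℝ) * q j ^ 2 := by positivity
    have h2 : 0 ≤ Y j ^ 2 - ξ j ^ 2 := by
      have := hξpos j; have := hYgt j; nlinarith
    exact mul_nonneg h1 h2
  have hsplit : flowF m n p q i Y - flowF m n p q i ξ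
      = A * (Y i - ξ i) - ∑ j ∈ Finset.univ.erase i,
        (n j : ℝ) * q j ^ 2 * (Y j ^ 2 - ξ j ^ 2) := by
    unfold flowF flowE
    rw [← Finset.add_sum_erase _ (fun j => (n j : ℝ) * q j ^ 2 * Y j ^ 2)
        (Finset.mem_univ i),
      ← Finset.add_sum_erase _ (fun j => (n j : ℝ) * q j ^ 2 * ξ j ^ 2)
        (Finset.mem_univ i)]
    simp only [mul_sub, Finset.sum_sub_distrib, hA]
    ring
  have hApos : 0 ≤ A * (Y i - ξ i) := by
    have h1 := hFY i; have h2 := hFξ i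
    nlinarith [hSnn, hsplit]
  have hYi : 0 < Y i - ξ i := sub_pos.mpr (hYgt i)
  have hAnn : 0 ≤ A := nonneg_of_mul_nonneg_right (mul_comm A _ ▸ hApos) hYi
  constructor
  · exact hAnn
  · have hden : 0 < ((n i : ℝ) + 1) * q i ^ 2 := by
      have := hq i; positivity
    rw [lt_div_iff₀ hden]
    have := hξpos i; have := hYgt i
    nlinarith [hAnn]
end

section
/- Let H(τ) be a smooth family of positive-definite symmetric r×r matrices and b₁(τ),...,b_m(τ) > 0 solving the torus-bundle backwards Ricci flow: dh_{αβ}/dτ = Σ_{α̃,β̃}Σᵢ nᵢ q_{α̃i}q_{β̃i} h_{αα̃}h_{ββ̃}/bᵢ², dbᵢ/dτ = 2pᵢ − Σ_{α̃,β̃} q_{α̃i}q_{β̃i} h_{α̃β̃}/bᵢ, with pᵢ > 0 and nᵢ ∈ ℤ_{>0}. Then: (a) bᵢ(τ) ≤ 2pᵢτ + bᵢ(0); (b) the diagonal entries of H⁻¹ are nonincreasing in τ, i.e. h^{αα}(τ) ≤ h^{αα}(0); (c) there exists c > 0 with H(τ) ≥ c·I for all τ in the existence interval. -/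
/-!
Along the flow, `d/dτ (xᵀ H x) = Σᵢ nᵢ ⟨qᵢ, H x⟩² / bᵢ² ≥ 0`, so `H` increases in the Loewner
order. Since `yᵀ H⁻¹ y = sup_x (2 ⟨y, x⟩ - xᵀ H x)`, the inverse `H⁻¹` decreases, in particular
its diagonal. The same variational formula gives `⟨y, x⟩² ≤ (yᵀ H⁻¹ y) (xᵀ H x)`, hence
`|x|² ≤ tr (H τ)⁻¹ · xᵀ H x ≤ tr (H 0)⁻¹ · xᵀ H x`. Finally `bᵢ - 2 pᵢ τ` has derivative
`-qᵢᵀ H qᵢ / bᵢ ≤ 0`.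
-/

open Matrix

namespace Matrix

variable {ι : Type*} [Fintype ι]

lemma IsHermitian.dotProduct_mulVec_comm {A : Matrix ι ι ℝ} (hA : A.IsHermitian)
    (u v : ι → ℝ) : u ⬝ᵥ A *ᵥ v = v ⬝ᵥ A *ᵥ u := by
  rw [dotProduct_mulVec, ← mulVec_transpose, dotProduct_comm,
    ← conjTranspose_eq_transpose_of_trivial, hA.eq]

lemma PosSemidef.dotProduct_mulVec_self_nonneg {A : Matrix ι ι ℝ} (hA : A.PosSemidef)
    (x : ι → ℝ) : 0 ≤ x ⬝ᵥ A *ᵥ x := by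
  simpa using hA.dotProduct_mulVec_nonneg x

lemma dotProduct_mulVec_self_eq_sum {R : Type*} [CommSemiring R] (A : Matrix ι ι R)
    (x : ι → R) : x ⬝ᵥ A *ᵥ x = ∑ a, ∑ b, x a * x b * A a b := by
  simp only [dotProduct, mulVec, Finset.mul_sum]
  exact Finset.sum_congr rfl fun a _ => Finset.sum_congr rfl fun b _ => by ring

variable [DecidableEq ι]

lemma PosDef.mulVec_inv_mulVec {A : Matrix ι ι ℝ} (hA : A.PosDef) (y : ι → ℝ) :
    A *ᵥ (A⁻¹ *ᵥ y) = y := by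
  rw [mulVec_mulVec, mul_nonsing_inv _ ((isUnit_iff_isUnit_det A).mp hA.isUnit), one_mulVec]

lemma PosDef.two_mul_dotProduct_sub_le {A : Matrix ι ι ℝ} (hA : A.PosDef) (x y : ι → ℝ) :
    2 * (y ⬝ᵥ x) - x ⬝ᵥ A *ᵥ x ≤ y ⬝ᵥ A⁻¹ *ᵥ y := by
  have := hA.posSemidef.dotProduct_mulVec_self_nonneg (x - A⁻¹ *ᵥ y)
  simp only [mulVec_sub, sub_dotProduct, dotProduct_sub, hA.mulVec_inv_mulVec] at this
  rw [hA.isHermitian.dotProduct_mulVec_comm (A⁻¹ *ᵥ y) x, hA.mulVec_inv_mulVec,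
    dotProduct_comm (A⁻¹ *ᵥ y) y, dotProduct_comm x y] at this
  linarith

lemma PosDef.dotProduct_inv_mulVec_le_of_le {A B : Matrix ι ι ℝ} (hA : A.PosDef)
    (hB : B.PosDef) (hAB : ∀ x, x ⬝ᵥ A *ᵥ x ≤ x ⬝ᵥ B *ᵥ x) (y : ι → ℝ) :
    y ⬝ᵥ B⁻¹ *ᵥ y ≤ y ⬝ᵥ A⁻¹ *ᵥ y := by
  have hmax : (B⁻¹ *ᵥ y) ⬝ᵥ B *ᵥ (B⁻¹ *ᵥ y) = y ⬝ᵥ B⁻¹ *ᵥ y := by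
    rw [hB.mulVec_inv_mulVec, dotProduct_comm]
  linarith [hAB (B⁻¹ *ᵥ y), hA.two_mul_dotProduct_sub_le (B⁻¹ *ᵥ y) y]

lemma PosDef.sq_dotProduct_le {A : Matrix ι ι ℝ} (hA : A.PosDef) (x y : ι → ℝ) :
    (y ⬝ᵥ x) ^ 2 ≤ (y ⬝ᵥ A⁻¹ *ᵥ y) * (x ⬝ᵥ A *ᵥ x) := by
  have hquad : ∀ t : ℝ,
      0 ≤ (x ⬝ᵥ A *ᵥ x) * (t * t) + -(2 * (y ⬝ᵥ x)) * t + y ⬝ᵥ A⁻¹ *ᵥ y := fun t => by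
    have := hA.two_mul_dotProduct_sub_le (t • x) y
    simp only [mulVec_smul, dotProduct_smul, smul_dotProduct, smul_eq_mul] at this
    linarith
  have := discrim_le_zero hquad
  rw [discrim] at this
  linarith

lemma PosDef.sum_sq_le_trace_inv_mul {A : Matrix ι ι ℝ} (hA : A.PosDef) (x : ι → ℝ) :
    ∑ a, x a ^ 2 ≤ A⁻¹.trace * (x ⬝ᵥ A *ᵥ x) := by
  rw [trace, Finset.sum_mul]
  refine Finset.sum_le_sum fun a _ => ?_
  simpa [mulVec_single_one] using hA.sq_dotProduct_le x (Pi.single a 1)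

lemma PosDef.inv_add_one_mul_sum_sq_le {A : Matrix ι ι ℝ} (hA : A.PosDef) {K : ℝ}
    (hK : A⁻¹.trace ≤ K) (x : ι → ℝ) : (K + 1)⁻¹ * ∑ a, x a ^ 2 ≤ x ⬝ᵥ A *ᵥ x := by
  have htr := hA.inv.posSemidef.trace_nonneg
  have hq := hA.posSemidef.dotProduct_mulVec_self_nonneg x
  rw [inv_mul_le_iff₀ (by linarith)]
  nlinarith [hA.sum_sq_le_trace_inv_mul x]

end Matrix

lemma monotoneOn_of_forall_hasDerivAt_nonneg {D : Set ℝ} (hD : Convex ℝ D) {f f' : ℝ → ℝ}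
    (hf : ∀ x ∈ D, HasDerivAt f (f' x) x) (hf' : ∀ x ∈ D, 0 ≤ f' x) : MonotoneOn f D :=
  monotoneOn_of_hasDerivWithinAt_nonneg hD (fun x hx => (hf x hx).continuousAt.continuousWithinAt)
    (fun x hx => (hf x (interior_subset hx)).hasDerivWithinAt)
    fun x hx => hf' x (interior_subset hx)

lemma hasDerivAt_dotProduct_mulVec {ι : Type*} [Fintype ι] {A : ℝ → Matrix ι ι ℝ}
    {A' : ι → ι → ℝ} {t : ℝ} (hA : ∀ a b, HasDerivAt (fun s => A s a b) (A' a b) t)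
    (x : ι → ℝ) : HasDerivAt (fun s => x ⬝ᵥ A s *ᵥ x) (x ⬝ᵥ of A' *ᵥ x) t := by
  simp only [dotProduct_mulVec_self_eq_sum]
  exact HasDerivAt.fun_sum fun a _ => HasDerivAt.fun_sum fun b _ => (hA a b).const_mul _

section TorusBundleRicciFlow

variable {ι κ : Type*} [Fintype ι]

lemma dotProduct_flow_mulVec_eq [Fintype κ] (w d : κ → ℝ) (q : ι → κ → ℝ) (H : Matrix ι ι ℝ)
    (x : ι → ℝ) :
    x ⬝ᵥ (of fun a b => ∑ a', ∑ b', ∑ i, w i * q a' i * q b' i * H a a' * H b b' / d i) *ᵥ x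
      = ∑ i, w i * (∑ a, ∑ a', x a * H a a' * q a' i) ^ 2 / d i := by
  have hsq : ∀ i, w i * (∑ a, ∑ a', x a * H a a' * q a' i) ^ 2 / d i = ∑ a, ∑ b, ∑ a', ∑ b',
      x a * x b * (w i * q a' i * q b' i * H a a' * H b b' / d i) := fun i => by
    simp only [sq, Finset.sum_mul_sum]
    simp only [Finset.mul_sum, Finset.sum_div]
    refine Finset.sum_congr rfl fun a _ => Finset.sum_congr rfl fun b _ =>
      Finset.sum_congr rfl fun a' _ => Finset.sum_congr rfl fun b' _ => by ring
  simp only [hsq, dotProduct_mulVec_self_eq_sum, of_apply, Finset.mul_sum]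
  symm
  rw [Finset.sum_comm]
  refine Finset.sum_congr rfl fun a _ => ?_
  rw [Finset.sum_comm]
  refine Finset.sum_congr rfl fun b _ => ?_
  rw [Finset.sum_comm]
  exact Finset.sum_congr rfl fun a' _ => Finset.sum_comm

variable {n : κ → ℕ} {p : κ → ℝ} {q : ι → κ → ℤ} {D : Set ℝ} {H : ℝ → Matrix ι ι ℝ}
  {b : ℝ → κ → ℝ}

lemma monotoneOn_dotProduct_mulVec_of_flow [Fintype κ] (hD : Convex ℝ D)
    (hH : ∀ τ ∈ D, ∀ α β : ι, HasDerivAt (fun s => H s α β)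
      (∑ α' : ι, ∑ β' : ι, ∑ i : κ,
        (n i : ℝ) * (q α' i : ℝ) * (q β' i : ℝ) * H τ α α' * H τ β β' / (b τ i) ^ 2) τ)
    (x : ι → ℝ) : MonotoneOn (fun s => x ⬝ᵥ H s *ᵥ x) D :=
  monotoneOn_of_forall_hasDerivAt_nonneg hD (fun s hs => hasDerivAt_dotProduct_mulVec (hH s hs) x)
    fun s _ => by
      rw [dotProduct_flow_mulVec_eq]
      exact Finset.sum_nonneg fun i _ => by positivity

lemma monotoneOn_two_mul_mul_sub_of_flow (hD : Convex ℝ D) (hHpd : ∀ τ ∈ D, (H τ).PosDef)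
    (hbpos : ∀ τ ∈ D, ∀ i, 0 < b τ i)
    (hb : ∀ τ ∈ D, ∀ i : κ, HasDerivAt (fun s => b s i)
      (2 * p i - (∑ α' : ι, ∑ β' : ι, (q α' i : ℝ) * (q β' i : ℝ) * H τ α' β') / b τ i) τ)
    (i : κ) : MonotoneOn (fun s => 2 * p i * s - b s i) D := by
  refine monotoneOn_of_forall_hasDerivAt_nonneg hD
    (f' := fun s => (∑ α', ∑ β', (q α' i : ℝ) * (q β' i : ℝ) * H s α' β') / b s i)
    (fun s hs => (((hasDerivAt_id s).const_mul (2 * p i)).sub (hb s hs i)).congr_deriv (by ring))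
    fun s hs => div_nonneg ?_ (hbpos s hs i).le
  have := (hHpd s hs).posSemidef.dotProduct_mulVec_self_nonneg fun α => (q α i : ℝ)
  rwa [dotProduct_mulVec_self_eq_sum] at this

end TorusBundleRicciFlow

theorem stmt16_general (r m : ℕ) (n : Fin m → ℕ) (p : Fin m → ℝ) (q : Fin r → Fin m → ℤ)
    (T : ℝ) (hT : 0 < T)
    (H : ℝ → Matrix (Fin r) (Fin r) ℝ) (b : ℝ → Fin m → ℝ)
    (hHpd : ∀ τ ∈ Set.Ico (0 : ℝ) T, (H τ).PosDef)
    (hbpos : ∀ τ ∈ Set.Ico (0 : ℝ) T, ∀ i, 0 < b τ i)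
    (hH : ∀ τ ∈ Set.Ico (0 : ℝ) T, ∀ α β : Fin r,
      HasDerivAt (fun s => H s α β)
        (∑ α' : Fin r, ∑ β' : Fin r, ∑ i : Fin m,
          (n i : ℝ) * (q α' i : ℝ) * (q β' i : ℝ) * H τ α α' * H τ β β' / (b τ i) ^ 2) τ)
    (hb : ∀ τ ∈ Set.Ico (0 : ℝ) T, ∀ i : Fin m,
      HasDerivAt (fun s => b s i)
        (2 * p i -
          (∑ α' : Fin r, ∑ β' : Fin r, (q α' i : ℝ) * (q β' i : ℝ) * H τ α' β') / b τ i) τ) :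
    (∀ τ ∈ Set.Ico (0 : ℝ) T, ∀ i, b τ i ≤ 2 * p i * τ + b 0 i) ∧
    (∀ τ ∈ Set.Ico (0 : ℝ) T, ∀ α : Fin r, (H τ)⁻¹ α α ≤ (H 0)⁻¹ α α) ∧
    (∃ c > (0 : ℝ), ∀ τ ∈ Set.Ico (0 : ℝ) T, ∀ x : Fin r → ℝ,
      c * (∑ α, x α ^ 2) ≤ x ⬝ᵥ (H τ).mulVec x) := by
  have h0 : (0 : ℝ) ∈ Set.Ico 0 T := ⟨le_rfl, hT⟩
  have hinv : ∀ τ ∈ Set.Ico (0 : ℝ) T, ∀ α, (H τ)⁻¹ α α ≤ (H 0)⁻¹ α α := fun τ hτ α => by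
    simpa [mulVec_single_one] using (hHpd 0 h0).dotProduct_inv_mulVec_le_of_le (hHpd τ hτ)
      (fun x => monotoneOn_dotProduct_mulVec_of_flow (convex_Ico 0 T) hH x h0 hτ hτ.1)
      (Pi.single α 1)
  refine ⟨fun τ hτ i => ?_, hinv, ?_⟩
  · have := monotoneOn_two_mul_mul_sub_of_flow (convex_Ico 0 T) hHpd hbpos hb i h0 hτ hτ.1
    linarith
  · refine ⟨((H 0)⁻¹.trace + 1)⁻¹, ?_, fun τ hτ x => ?_⟩
    · exact inv_pos.mpr (by linarith [(hHpd 0 h0).inv.posSemidef.trace_nonneg])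
    · exact (hHpd τ hτ).inv_add_one_mul_sum_sq_le (Finset.sum_le_sum fun α _ => hinv τ hτ α) x

/-- basic estimates for the torus-bundle backwards Ricci flow. -/
theorem stmt16 (r m : ℕ) (n : Fin m → ℕ) (p : Fin m → ℝ) (q : Fin r → Fin m → ℤ)
    (hn : ∀ i, 0 < n i) (hp : ∀ i, 0 < p i)
    (T : ℝ) (hT : 0 < T)
    (H : ℝ → Matrix (Fin r) (Fin r) ℝ) (b : ℝ → Fin m → ℝ)
    (hHsymm : ∀ τ ∈ Set.Ico (0 : ℝ) T, (H τ).IsSymm)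
    (hHpd : ∀ τ ∈ Set.Ico (0 : ℝ) T, (H τ).PosDef)
    (hbpos : ∀ τ ∈ Set.Ico (0 : ℝ) T, ∀ i, 0 < b τ i)
    (hH : ∀ τ ∈ Set.Ico (0 : ℝ) T, ∀ α β : Fin r,
      HasDerivAt (fun s => H s α β)
        (∑ α' : Fin r, ∑ β' : Fin r, ∑ i : Fin m,
          (n i : ℝ) * (q α' i : ℝ) * (q β' i : ℝ) * H τ α α' * H τ β β' / (b τ i) ^ 2) τ)
    (hb : ∀ τ ∈ Set.Ico (0 : ℝ) T, ∀ i : Fin m,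
      HasDerivAt (fun s => b s i)
        (2 * p i -
          (∑ α' : Fin r, ∑ β' : Fin r, (q α' i : ℝ) * (q β' i : ℝ) * H τ α' β') / b τ i) τ) :
    (∀ τ ∈ Set.Ico (0 : ℝ) T, ∀ i, b τ i ≤ 2 * p i * τ + b 0 i) ∧
    (∀ τ ∈ Set.Ico (0 : ℝ) T, ∀ α : Fin r, (H τ)⁻¹ α α ≤ (H 0)⁻¹ α α) ∧
    (∃ c > (0 : ℝ), ∀ τ ∈ Set.Ico (0 : ℝ) T, ∀ x : Fin r → ℝ,
      c * (∑ α, x α ^ 2) ≤ x ⬝ᵥ (H τ).mulVec x) :=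
  stmt16_general r m n p q T hT H b hHpd hbpos hH hb
end
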